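/- For any fixed vector w₀ and γ > 0, the quantity J_pr(w₀) − (1/γ) ρ(w₀) is a lower bound on R_γ(J_pr(w)), where J_pr is any convex function of the noise w (such as the optimal value of the prescient planning problem). -/

import Mathlib

/-!
A convex function lies above a supporting hyperplane at `w₀`: for some `y`,
`γ J(w) ≥ γ J(w₀) + ⟪w - w₀, y⟫` for every `w`. Exponentiating, integrating and taking logarithms
gives `γ J(w₀) - ⟪w₀, y⟫ + c(y) ≤ log E[exp(γ J(w))]`, and `⟪w₀, y⟫ - c(y) ≤ ρ(w₀)` because `ρ`
is the convex conjugate of `c`.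
-/

open MeasureTheory Real Set

/-- Separate `(x₀, f x₀)` from the open convex strict epigraph of `f`; the separating functional has
negative vertical component `β`, and its horizontal part divided by `-β` is a subgradient. -/
theorem ConvexOn.exists_subgradient {E : Type*} [TopologicalSpace E] [AddCommGroup E]
    [Module ℝ E] [IsTopologicalAddGroup E] [ContinuousSMul ℝ E] {f : E → ℝ}
    (hf : ConvexOn ℝ univ f) (hcont : Continuous f) (x₀ : E) :
    ∃ g : StrongDual ℝ E, ∀ x, f x₀ + g (x - x₀) ≤ f x := by
  have hopen : IsOpen {p : E × ℝ | f p.1 < p.2} :=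
    isOpen_lt (hcont.comp continuous_fst) continuous_snd
  have hconv : Convex ℝ {p : E × ℝ | f p.1 < p.2} := by
    simpa using hf.convex_strict_epigraph
  obtain ⟨F, hF⟩ :=
    geometric_hahn_banach_open_point hconv hopen (x := (x₀, f x₀)) (lt_irrefl (f x₀))
  set φ := F.comp (ContinuousLinearMap.inl ℝ E ℝ)
  set β := F (0, 1)
  have hsep : ∀ x t, f x < t → φ x + t * β < φ x₀ + f x₀ * β := by
    have hF_apply : ∀ x t, F (x, t) = φ x + t * β := fun x t => by
      rw [show ((x, t) : E × ℝ) = (x, 0) + t • (0, 1) by simp, map_add, map_smul, smul_eq_mul]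
      rfl
    intro x t h
    simpa only [hF_apply] using hF (x, t) h
  have hβ : 0 < -β := by
    have := hsep x₀ (f x₀ + 1) (by linarith)
    linarith
  refine ⟨(-β)⁻¹ • φ, fun x => ?_⟩
  have hx : φ x + f x * β ≤ φ x₀ + f x₀ * β := le_of_forall_pos_lt_add fun ε hε => by
    have hshift : (f x + ε / -β) * β = f x * β - ε := by
      field_simp [(neg_pos.1 hβ).ne]
      ring
    have := hsep x (f x + ε / -β) (by linarith [div_pos hε hβ])
    linarith
  have : (-β)⁻¹ * (φ x - φ x₀) ≤ f x - f x₀ :=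
    (inv_mul_le_iff₀ hβ).2 (by linarith)
  change f x₀ + (-β)⁻¹ * φ (x - x₀) ≤ f x
  rw [map_sub]
  linarith

theorem ConvexOn.exists_dotProduct_subgradient {ι : Type*} [Fintype ι] {f : (ι → ℝ) → ℝ}
    (hf : ConvexOn ℝ univ f) (x₀ : ι → ℝ) :
    ∃ y : ι → ℝ, ∀ x, f x₀ + (x - x₀) ⬝ᵥ y ≤ f x := by
  classical
  obtain ⟨g, hg⟩ := hf.exists_subgradient (continuousOn_univ.1 (hf.continuousOn isOpen_univ)) x₀
  refine ⟨fun i => g fun j => if i = j then 1 else 0, fun x => ?_⟩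
  have hcoord := (g : (ι → ℝ) →ₗ[ℝ] ℝ).pi_apply_eq_sum_univ (x - x₀)
  simp only [ContinuousLinearMap.coe_coe, smul_eq_mul] at hcoord
  rw [dotProduct, ← hcoord]
  exact hg x

theorem add_log_integral_exp_le {Ω : Type*} [MeasurableSpace Ω] {μ : Measure Ω} [NeZero μ]
    {f g : Ω → ℝ} {a : ℝ} (hf : Integrable (fun ω => exp (f ω)) μ)
    (hg : Integrable (fun ω => exp (g ω)) μ) (hfg : ∀ᵐ ω ∂μ, a + f ω ≤ g ω) :
    a + log (∫ ω, exp (f ω) ∂μ) ≤ log (∫ ω, exp (g ω) ∂μ) := by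
  rw [le_log_iff_exp_le (integral_exp_pos hg), exp_add, exp_log (integral_exp_pos hf),
    ← integral_const_mul]
  refine integral_mono_ae (hf.const_mul _) hg ?_
  filter_upwards [hfg] with ω hω
  rw [← exp_add]
  exact exp_le_exp.2 hω

/-- For any fixed w₀ and γ > 0, J_pr(w₀) − (1/γ) ρ(w₀) is a lower bound
on R_γ(J_pr(w)) for convex J_pr. -/
theorem prescient_pointwise_bound {Ω : Type*} [MeasurableSpace Ω]
    (μ : Measure Ω) [IsProbabilityMeasure μ] {n : ℕ}
    (w : Ω → Fin n → ℝ)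
    (c : (Fin n → ℝ) → ℝ) (ρ : (Fin n → ℝ) → ℝ)
    (Jpr : (Fin n → ℝ) → ℝ) (γ : ℝ) (hγ : 0 < γ)
    (hJ : ConvexOn ℝ Set.univ Jpr)
    (hint : ∀ y : Fin n → ℝ,
      Integrable (fun ω => Real.exp (∑ i, w ω i * y i)) μ)
    (hc : ∀ y, c y = Real.log (∫ ω, Real.exp (∑ i, w ω i * y i) ∂μ))
    (hρ : ∀ x, IsLUB {r : ℝ | ∃ y : Fin n → ℝ, r = ∑ i, x i * y i - c y} (ρ x))
    (hJint : Integrable (fun ω => Real.exp (γ * Jpr (w ω))) μ)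
    (w₀ : Fin n → ℝ) :
    Jpr w₀ - (1 / γ) * ρ w₀
      ≤ (1 / γ) * Real.log (∫ ω, Real.exp (γ * Jpr (w ω)) ∂μ) := by
  obtain ⟨y, hy⟩ := hJ.exists_dotProduct_subgradient w₀
  have hlog : γ * Jpr w₀ - w₀ ⬝ᵥ (γ • y) + c (γ • y)
      ≤ log (∫ ω, exp (γ * Jpr (w ω)) ∂μ) := by
    rw [hc]
    refine add_log_integral_exp_le (hint _) hJint (ae_of_all _ fun ω => ?_)
    have hlin : (w ω) ⬝ᵥ (γ • y) - w₀ ⬝ᵥ (γ • y) = γ * ((w ω - w₀) ⬝ᵥ y) := by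
      simp only [dotProduct_smul, sub_dotProduct, smul_eq_mul, mul_sub]
    have hscaled := mul_le_mul_of_nonneg_left (hy (w ω)) hγ.le
    change _ + (w ω) ⬝ᵥ (γ • y) ≤ _
    linarith
  have hρ_ge : w₀ ⬝ᵥ (γ • y) - c (γ • y) ≤ ρ w₀ := (hρ w₀).1 ⟨γ • y, rfl⟩
  rw [one_div, ← div_eq_inv_mul, ← div_eq_inv_mul, sub_le_iff_le_add, ← add_div,
    le_div_iff₀ hγ]
  linarith
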